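/- arXiv:2505.01965 — 4 statements merged into one kernel-verified Lean document; each statement's English description precedes it below -/
import Mathlib

section
/- Let G be a finite group with a normal Sylow p-subgroup P, and let H be a p-complement of G (a subgroup with |H| = |G|/|P| and H ∩ P = 1). If λ is a linear character of P that is G-invariant and has order a power of p, and α is an irreducible character of G/P (viewed as a character of G with P in its kernel), then for the product character χ = λ̂·α (where λ̂ is an extension of λ to G of p-power order), the multiplicity [χ|_H, 1_H] equals [α|_H, 1_H]. -/
/-!
`λ̂` is trivial on `H`: its values on `H` have order dividing both `ord λ̂`, a power of `p`, and
`|H| = |G : P|`, which is prime to `p`. Hence `λ̂α` and `α` agree on `H`.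
-/

open CategoryTheory
open scoped Classical

noncomputable def cInner {X : Type} (f g : X → ℂ) : ℂ :=
  (Nat.card X : ℂ)⁻¹ * ∑ᶠ x, f x * (starRingEnd ℂ) (g x)

def IsChar (G : Type) [Group G] (χ : G → ℂ) : Prop :=
  ∃ V : FDRep ℂ G, FDRep.character V = χ

def IsIrrChar (G : Type) [Group G] (χ : G → ℂ) : Prop :=
  ∃ V : FDRep ℂ G, Simple V ∧ FDRep.character V = χ

theorem MonoidHom.apply_eq_one_of_coprime_orderOf_card {G M : Type*} [Group G] [CommMonoid M]
    (f : G →* M) (H : Subgroup G) (hcop : (orderOf f).Coprime (Nat.card H)) (h : H) :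
    f h = 1 :=
  (pow_eq_one_iff_of_coprime hcop).1
    ⟨by rw [← MonoidHom.pow_apply, pow_orderOf_eq_one, MonoidHom.one_apply],
      by rw [← map_pow, ← Subgroup.coe_pow, pow_card_eq_one', Subgroup.coe_one, map_one]⟩

theorem Sylow.not_dvd_card_of_card_mul_card_eq {G : Type*} [Group G] [Finite G] {p : ℕ}
    [Fact p.Prime] (P : Sylow p G) (H : Subgroup G)
    (hcard : Nat.card H * Nat.card (P : Subgroup G) = Nat.card G) : ¬ p ∣ Nat.card H := by
  have hindex : Nat.card H = (P : Subgroup G).index :=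
    Nat.eq_of_mul_eq_mul_right Nat.card_pos
      (hcard.trans (by rw [mul_comm, Subgroup.card_mul_index]))
  exact hindex ▸ P.not_dvd_index

theorem stmt6_general {G : Type} [Group G] [Finite G] (p : ℕ) [Fact p.Prime]
    (P : Sylow p G)
    (H : Subgroup G)
    (hHcard : Nat.card H * Nat.card (P : Subgroup G) = Nat.card G)
    (lamhat : G →* ℂˣ)
    (hord : ∃ k : ℕ, orderOf lamhat = p ^ k)
    (α : G → ℂ) :
    cInner (fun h : H => (lamhat h : ℂ) * α h) (fun _ : H => (1 : ℂ))
      = cInner (fun h : H => α h) (fun _ : H => (1 : ℂ)) := by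
  obtain ⟨k, hk⟩ := hord
  have hcop : (orderOf lamhat).Coprime (Nat.card H) :=
    hk ▸ ((Nat.Prime.coprime_iff_not_dvd Fact.out).mpr
      (P.not_dvd_card_of_card_mul_card_eq H hHcard)).pow_left k
  have htriv (h : H) : lamhat h = 1 := lamhat.apply_eq_one_of_coprime_orderOf_card H hcop h
  simp only [htriv, Units.val_one, one_mul]

/-- with P ⊴ G a normal Sylow p-subgroup, H a p-complement, λ̂ a G-invariant
linear extension of p-power order and α ∈ Irr(G/P), [ (λ̂α)|_H, 1_H ] = [ α|_H, 1_H ]. -/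
theorem stmt6 {G : Type} [Group G] [Finite G] (p : ℕ) [Fact p.Prime]
    (P : Sylow p G) (hP : (P : Subgroup G).Normal)
    (H : Subgroup G)
    (hHcard : Nat.card H * Nat.card (P : Subgroup G) = Nat.card G)
    (hHP : H ⊓ (P : Subgroup G) = ⊥)
    (lam : ↥(P : Subgroup G) →* ℂˣ)
    (hinv : ∀ (g : G) (x : ↥(P : Subgroup G)),
      lam ⟨g * x * g⁻¹, hP.conj_mem x.1 x.2 g⟩ = lam x)
    (lamhat : G →* ℂˣ) (hext : ∀ x : ↥(P : Subgroup G), lamhat x = lam x)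
    (hord : ∃ k : ℕ, orderOf lamhat = p ^ k)
    (α : G → ℂ) (hα : IsIrrChar G α) (hker : ∀ x ∈ (P : Subgroup G), α x = α 1) :
    cInner (fun h : H => (lamhat h : ℂ) * α h) (fun _ : H => (1 : ℂ))
      = cInner (fun h : H => α h) (fun _ : H => (1 : ℂ)) :=
  stmt6_general p P H hHcard lamhat hord α
end

section
/- Let G be a finite group, P ∈ Syl_p(G), K ⊴ G with p ∤ |K|, and let Δ be a set of linear characters of K each of which extends to a character of G (in particular each is G-invariant). Then the map Δ → Irr(C_K(P)) sending θ to its restriction θ|_{C_K(P)} is injective. -/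
open CategoryTheory
open scoped Classical

/-- linear characters of a normal p'-subgroup K which extend to G are
determined by their restriction to C_K(P). -/
theorem stmt8 {G : Type} [Group G] [Finite G] (p : ℕ) [Fact p.Prime]
    (P : Sylow p G) (K : Subgroup G) (hK : K.Normal) (hK' : ¬ p ∣ Nat.card K)
    (Δ : Set (↥K →* ℂˣ))
    (hext : ∀ θ ∈ Δ, ∃ γ : G →* ℂˣ, ∀ k : ↥K, γ k = θ k) :
    ∀ θ₁ ∈ Δ, ∀ θ₂ ∈ Δ,
      (∀ k : ↥K, (k : G) ∈ Subgroup.centralizer ((P : Subgroup G) : Set G) → θ₁ k = θ₂ k) →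
      θ₁ = θ₂ := by
  intro θ₁ h1 θ₂ h2 hres
  obtain ⟨γ₁, hγ₁⟩ := hext θ₁ h1
  obtain ⟨γ₂, hγ₂⟩ := hext θ₂ h2
  set γ : G →* ℂˣ := γ₁ / γ₂ with hγdef
  have hγval : ∀ g : G, γ g = γ₁ g / γ₂ g := fun g => rfl
  -- γ is trivial on C_K(P)
  have hγC : ∀ k : ↥K, (k : G) ∈ Subgroup.centralizer ((P : Subgroup G) : Set G) → γ k = 1 := by
    intro k hk
    rw [hγval, hγ₁, hγ₂, hres k hk, div_self']
  ext k
  suffices h : γ (k : G) = 1 by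
    have : γ₁ (k : G) = γ₂ (k : G) := by
      have := h
      rw [hγval] at this
      exact div_eq_one.mp this
    rw [← hγ₁, ← hγ₂, this]
  -- the "coset" T
  set T := {c : G // c ∈ K ∧ γ c = γ (k : G)} with hT
  -- action of P on T by conjugation
  letI sm : SMul ↥(P : Subgroup G) T :=
    ⟨fun x c => ⟨(x : G) * c * (x : G)⁻¹, hK.conj_mem c.1 c.2.1 x, by
        simp [map_mul, mul_comm, mul_assoc, c.2.2]⟩⟩
  have hsmul : ∀ (x : ↥(P : Subgroup G)) (c : T), ((x • c : T) : G) = (x:G) * c * (x:G)⁻¹ :=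
    fun x c => rfl
  letI : MulAction ↥(P : Subgroup G) T :=
    { smul := sm.smul
      one_smul := fun c => by
        apply Subtype.ext
        rw [hsmul]
        simp
      mul_smul := fun x y c => by
        apply Subtype.ext
        rw [hsmul, hsmul, hsmul]
        push_cast
        group }
  -- T is in bijection with the kernel subgroup
  set L := (γ.comp K.subtype).ker with hL
  have hequiv : T ≃ ↥L :=
    { toFun := fun c => ⟨⟨(k : G)⁻¹ * c, mul_mem (inv_mem k.2) c.2.1⟩, by
        show γ ((k : G)⁻¹ * (c : G)) = 1
        rw [map_mul, map_inv, c.2.2, inv_mul_cancel]⟩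
      invFun := fun d => ⟨(k : G) * d.1, mul_mem k.2 d.1.2, by
        have hd : γ (d.1 : G) = 1 := d.2
        rw [map_mul, hd, mul_one]⟩
      left_inv := fun c => by
        apply Subtype.ext
        show (k : G) * ((k : G)⁻¹ * (c : G)) = (c : G)
        group
      right_inv := fun d => by
        apply Subtype.ext; apply Subtype.ext
        show (k : G)⁻¹ * ((k : G) * (d.1 : G)) = (d.1 : G)
        group }
  have hcardT : ¬ p ∣ Nat.card T := by
    rw [Nat.card_congr hequiv]
    intro hdvd
    exact hK' (hdvd.trans (Subgroup.card_subgroup_dvd_card L))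
  obtain ⟨c, hc⟩ := (P.isPGroup').nonempty_fixed_point_of_prime_not_dvd_card T hcardT
  -- c is P-central
  have hcC : (c : G) ∈ Subgroup.centralizer ((P : Subgroup G) : Set G) := by
    intro x hx
    have := (MulAction.mem_fixedPoints.mp hc) (⟨x, hx⟩ : ↥(P : Subgroup G))
    have h2 := congrArg (Subtype.val) this
    rw [hsmul] at h2
    calc x * (c : G) = (x * c * x⁻¹) * x := by group
    _ = (c : G) * x := by rw [h2]
  have : γ (c : G) = 1 := hγC ⟨(c:G), c.2.1⟩ hcC
  rw [← c.2.2, this]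
end

section
/- Let a finite group A act on a finite abelian group P by automorphisms. Then the permutation actions of A on P and on the dual group Irr(P) = Hom(P, ℂˣ) have the same permutation character; in particular the number of A-orbits on P equals the number of A-orbits on Irr(P), and more strongly, for every a ∈ A the number of fixed points of a on P equals the number of fixed points of a on Irr(P). (Brauer's lemma on character tables for abelian groups.) -/
open CategoryTheory
open scoped Classical

open MulAction

/-- The dual of a finite abelian group has the same cardinality. -/
lemma stmt13_card_dual_eq (Q : Type*) [CommGroup Q] [Finite Q] :
    Nat.card (Q →* ℂˣ) = Nat.card Q := by
  haveI : NeZero ((Monoid.exponent Q : ℕ) : ℂ) :=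
    ⟨Nat.cast_ne_zero.mpr Monoid.exponent_ne_zero_of_finite⟩
  obtain ⟨e⟩ := CommGroup.monoidHom_mulEquiv_of_hasEnoughRootsOfUnity Q ℂ
  exact Nat.card_congr e.toEquiv

/-- The range of the orbit map is in bijection with the orbit quotient. -/
lemma stmt13_card_range_orbit (G X : Type*) [Group G] [MulAction G X] :
    Nat.card (Set.range fun x : X => orbit G x) = Nat.card (Quotient (orbitRel G X)) := by
  refine (Nat.card_congr (Equiv.ofBijective ?_ ⟨?_, ?_⟩)).symm
  · exact Quotient.lift (fun x => (⟨orbit G x, x, rfl⟩ : Set.range fun x : X => orbit G x))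
      (fun x y h => Subtype.ext (orbit_eq_iff.mpr (orbitRel_apply.mp h)))
  · rintro ⟨x⟩ ⟨y⟩ h
    exact Quotient.sound (orbitRel_apply.mpr (orbit_eq_iff.mp (congrArg Subtype.val h)))
  · rintro ⟨_, x, rfl⟩
    exact ⟨⟦x⟧, rfl⟩

/-- For each automorphism, the number of fixed points on `P` and on `Irr P` agree. -/
lemma stmt13_fix_card_eq {A P : Type} [Group A] [CommGroup P] [Finite P]
    [MulDistribMulAction A P] (a : A) :
    Nat.card {x : P // a • x = x}
      = Nat.card {lam : P →* ℂˣ // ∀ x : P, lam (a • x) = lam x} := by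
  set f : P →* P := MonoidHom.mk' (fun x => a • x * x⁻¹) (by
    intro x y
    simp [smul_mul', mul_inv_rev, mul_comm, mul_left_comm, mul_assoc]) with hf
  have hfx : ∀ x : P, f x = a • x * x⁻¹ := fun x => rfl
  have e1 : {x : P // a • x = x} ≃ f.ker :=
    Equiv.subtypeEquivRight (fun x => by
      rw [MonoidHom.mem_ker, hfx, mul_inv_eq_one, eq_comm])
  have key : ∀ (lam : P →* ℂˣ), (∀ x, lam (a • x) = lam x) ↔ ∀ y ∈ f.range, lam y = 1 := by
    intro lam
    constructor
    · rintro h y ⟨x, rfl⟩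
      rw [hfx, map_mul, map_inv, h x, mul_inv_cancel]
    · intro h x
      have := h (f x) ⟨x, rfl⟩
      rw [hfx, map_mul, map_inv, mul_inv_eq_one] at this
      exact this
  have hmk : ∀ x : P, ((a • x : P) : P ⧸ f.range) = (x : P ⧸ f.range) := by
    intro x
    refine (QuotientGroup.eq).mpr ?_
    have : (f x)⁻¹ = (a • x)⁻¹ * x := by
      rw [hfx, mul_inv_rev, inv_inv, mul_comm]
    exact this ▸ inv_mem ⟨x, rfl⟩
  have e2 : {lam : P →* ℂˣ // ∀ x : P, lam (a • x) = lam x} ≃ (P ⧸ f.range →* ℂˣ) :=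
    { toFun := fun l => QuotientGroup.lift f.range l.1 ((key l.1).mp l.2)
      invFun := fun ψ => ⟨ψ.comp (QuotientGroup.mk' f.range), fun x => by
        simp only [MonoidHom.comp_apply, QuotientGroup.mk'_apply, hmk x]⟩
      left_inv := fun l => Subtype.ext (MonoidHom.ext fun x => rfl)
      right_inv := fun ψ => MonoidHom.ext fun q => by
        obtain ⟨x, rfl⟩ := QuotientGroup.mk_surjective q
        rfl }
  have h1 : Nat.card P = Nat.card (P ⧸ f.ker) * Nat.card f.ker :=
    Subgroup.card_eq_card_quotient_mul_card_subgroup f.ker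
  have h2 : Nat.card (P ⧸ f.ker) = Nat.card f.range :=
    Nat.card_congr (QuotientGroup.quotientKerEquivRange f).toEquiv
  have h3 : Nat.card P = Nat.card (P ⧸ f.range) * Nat.card f.range :=
    Subgroup.card_eq_card_quotient_mul_card_subgroup f.range
  have hr : 0 < Nat.card f.range := Nat.card_pos
  have hk : Nat.card f.ker = Nat.card (P ⧸ f.range) := by
    apply Nat.eq_of_mul_eq_mul_right hr
    rw [← h3, h1, h2, mul_comm]
  rw [Nat.card_congr e1, Nat.card_congr e2, stmt13_card_dual_eq, hk]

/-- Brauer's lemma on character tables for a finite abelian group P: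
for every a ∈ A the number of fixed points on P and on Irr(P) = Hom(P,ℂˣ) agree, and
the numbers of A-orbits on P and on Irr(P) agree. -/
theorem stmt13 {A P : Type} [Group A] [Finite A] [CommGroup P] [Finite P]
    [MulDistribMulAction A P] :
    (∀ a : A, Nat.card {x : P // a • x = x}
        = Nat.card {lam : P →* ℂˣ // ∀ x : P, lam (a • x) = lam x}) ∧
    Nat.card (Set.range fun x : P => MulAction.orbit A x)
      = Nat.card (Set.range fun lam : P →* ℂˣ =>
          {mu : P →* ℂˣ | ∃ a : A, ∀ x : P, mu x = lam (a⁻¹ • x)}) := by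
  classical
  have hfix : ∀ a : A, Nat.card {x : P // a • x = x}
      = Nat.card {lam : P →* ℂˣ // ∀ x : P, lam (a • x) = lam x} :=
    fun a => stmt13_fix_card_eq a
  refine ⟨hfix, ?_⟩
  have hset : (fun lam : P →* ℂˣ => {mu : P →* ℂˣ | ∃ a : A, ∀ x : P, mu x = lam (a⁻¹ • x)})
      = fun lam : P →* ℂˣ => orbit Aᵈᵐᵃ lam := by
    funext lam
    ext mu
    constructor
    · rintro ⟨a, h⟩
      exact ⟨DomMulAct.mk a⁻¹, DFunLike.ext _ _ fun x => (h x).symm⟩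
    · rintro ⟨c, rfl⟩
      exact ⟨(DomMulAct.mk.symm c)⁻¹, fun x => by rw [inv_inv]; rfl⟩
  rw [hset, stmt13_card_range_orbit, stmt13_card_range_orbit]
  haveI : Fintype P := Fintype.ofFinite P
  haveI : Fintype A := Fintype.ofFinite A
  haveI : Finite Aᵈᵐᵃ := Finite.of_equiv A (DomMulAct.mk (M := A))
  haveI : Fintype Aᵈᵐᵃ := Fintype.ofFinite _
  haveI : Finite (P →* ℂˣ) :=
    Nat.finite_of_card_ne_zero (by rw [stmt13_card_dual_eq]; exact Nat.card_pos.ne')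
  haveI : Fintype (P →* ℂˣ) := Fintype.ofFinite _
  haveI i1 : ∀ a : A, Fintype (fixedBy P a) := fun a => Fintype.ofFinite _
  haveI i2 : ∀ c : Aᵈᵐᵃ, Fintype (fixedBy (P →* ℂˣ) c) := fun c => Fintype.ofFinite _
  haveI : Fintype (Quotient (orbitRel A P)) := Fintype.ofFinite _
  haveI : Fintype (Quotient (orbitRel Aᵈᵐᵃ (P →* ℂˣ))) := Fintype.ofFinite _
  have b1 := MulAction.sum_card_fixedBy_eq_card_orbits_mul_card_group A P
  have b2 := MulAction.sum_card_fixedBy_eq_card_orbits_mul_card_group Aᵈᵐᵃ (P →* ℂˣ)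
  have hcardA : Fintype.card Aᵈᵐᵃ = Fintype.card A :=
    Fintype.card_congr (DomMulAct.mk (M := A)).symm
  have hfixcard : ∀ a : A,
      Fintype.card (fixedBy (P →* ℂˣ) (DomMulAct.mk a)) = Fintype.card (fixedBy P a) := by
    intro a
    rw [← Nat.card_eq_fintype_card, ← Nat.card_eq_fintype_card]
    have e1 : (fixedBy (P →* ℂˣ) (DomMulAct.mk a))
        ≃ {lam : P →* ℂˣ // ∀ x : P, lam (a • x) = lam x} :=
      Equiv.subtypeEquivRight fun lam => by
        show DomMulAct.mk a • lam = lam ↔ _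
        rw [DFunLike.ext_iff]
        rfl
    have e2 : (fixedBy P a) ≃ {x : P // a • x = x} :=
      Equiv.subtypeEquivRight fun x => Iff.rfl
    rw [Nat.card_congr e1, Nat.card_congr e2, hfix a]
  have hsum : (∑ c : Aᵈᵐᵃ, Fintype.card (fixedBy (P →* ℂˣ) c))
      = ∑ a : A, Fintype.card (fixedBy P a) := by
    rw [← Equiv.sum_comp (DomMulAct.mk (M := A))
      (fun c => Fintype.card (fixedBy (P →* ℂˣ) c))]
    exact Finset.sum_congr rfl fun a _ => hfixcard a
  rw [b1, b2, hcardA] at hsum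
  rw [Nat.card_eq_fintype_card, Nat.card_eq_fintype_card]
  exact (Nat.eq_of_mul_eq_mul_right Fintype.card_pos hsum).symm
end

section
/- Let G be a finite group, N ⊴ G, and θ a G-invariant irreducible character of N. Suppose that for every prime q and every subgroup Q ≤ G with N ≤ Q and Q/N ∈ Syl_q(G/N), θ extends to Q. Then θ extends to G. -/
open CategoryTheory
open scoped Classical

/-!
Since `θ` is `G`-invariant, every conjugate of a representation `ρ` affording `θ` is equivalent
to `ρ`, and the intertwiners assemble into a projective representation `P` of `G` on the space of
`ρ` with `P (n * g) = ρ n ∘ P g`. By Schur's lemma its factor set is a `ℂˣ`-valued 2-cocycle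
inflated from `G ⧸ N`. An extension of `θ` to the preimage of a Sylow `q`-subgroup `S` of `G ⧸ N`
makes the cocycle a coboundary on `S`, and the transfer from `S` shows that its `[G ⧸ N : S]`-th
power is a coboundary on `G ⧸ N`. These indices have no common prime factor, so the cocycle itself
is a coboundary and rescaling `P` gives a representation of `G` extending `ρ`; it is irreducible
because its restriction to `N` already is.
-/

open Module Representation

section Cocycle

variable {K A : Type*} [Group K] [CommGroup A]

def IsCocycle (β : K → K → A) : Prop :=
  ∀ a b c, β a b * β (a * b) c = β b c * β a (b * c)

def IsCoboundary (β : K → K → A) : Prop :=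
  ∃ μ : K → A, ∀ a b, β a b = μ a * μ b / μ (a * b)

-- The identity behind the transfer: `tᵢ` are coset representatives and `h₁ h₂ ∈ H`.
theorem IsCocycle.mul_mul_mul_eq {β : K → K → A} (hβ : IsCocycle β) {a b t₁ t₂ t₃ h₁ h₂ : K}
    (hb : b * t₁ = t₂ * h₂) (ha : a * t₂ = t₃ * h₁) :
    β a t₂ * β b t₁ * β h₁ h₂ * β t₃ (h₁ * h₂) = β a b * β (a * b) t₁ * β t₃ h₁ * β t₂ h₂ := by
  calc β a t₂ * β b t₁ * β h₁ h₂ * β t₃ (h₁ * h₂)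
      = β a t₂ * β b t₁ * (β t₃ h₁ * β (t₃ * h₁) h₂) := by rw [mul_assoc, ← hβ]
    _ = β b t₁ * (β a t₂ * β (a * t₂) h₂) * β t₃ h₁ := by rw [ha]; ac_rfl
    _ = β b t₁ * β a (b * t₁) * β t₃ h₁ * β t₂ h₂ := by rw [hβ a t₂ h₂, hb]; ac_rfl
    _ = β a b * β (a * b) t₁ * β t₃ h₁ * β t₂ h₂ := by rw [hβ a b t₁]

theorem IsCocycle.isCoboundary_pow_index {β : K → K → A} (hβ : IsCocycle β) {H : Subgroup K}
    [H.FiniteIndex] (hH : IsCoboundary fun a b : H => β a b) : IsCoboundary (β ^ H.index) := by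
  obtain ⟨ν, hν⟩ := hH
  have : Fintype (K ⧸ H) := Fintype.ofFinite _
  set t : K ⧸ H → K := Quotient.out
  have ht : ∀ (g : K) (x : K ⧸ H), (t (g • x))⁻¹ * g * t x ∈ H := fun g x => by
    rw [mul_assoc, ← QuotientGroup.eq, QuotientGroup.out_eq']
    exact congrArg (g • ·) (QuotientGroup.out_eq' x).symm
  set h : K → K ⧸ H → H := fun g x => ⟨_, ht g x⟩
  have h_mul : ∀ a b x, h (a * b) x = h a (b • x) * h b x := fun a b x => by
    ext; simp only [h, Subgroup.coe_mul, mul_smul]; group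
  -- `g ↦ ∏ₓ F g x` is the transfer of `ν`; by `hF` its coboundary is `β ^ [K : H]`.
  set F : K → K ⧸ H → A := fun g x => β g (t x) * ν (h g x) / β (t (g • x)) (h g x)
  have hF : ∀ a b x, F a (b • x) * F b x = β a b * F (a * b) x := fun a b x => by
    have key := hβ.mul_mul_mul_eq (a := a) (b := b) (t₁ := t x) (t₂ := t (b • x))
      (t₃ := t (a • b • x)) (h₁ := h a (b • x)) (h₂ := h b x) (by simp only [h]; group)
      (by simp only [h]; group)
    have hν' := (eq_div_iff_mul_eq'.mp (hν (h a (b • x)) (h b x))).symm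
    simp only [F, h_mul, mul_smul]
    rw [div_mul_div_comm, mul_div_assoc', div_eq_div_iff_mul_eq_mul]
    set h₁ := h a (b • x)
    set h₂ := h b x
    calc _ = β a (t (b • x)) * β b (t x) * (ν h₁ * ν h₂) * β (t (a • b • x)) (h₁ * h₂) := by
          ac_rfl
      _ = β a b * β (a * b) (t x) * β (t (a • b • x)) h₁ * β (t (b • x)) h₂ * ν (h₁ * h₂) := by
          rw [hν', ← key]; ac_rfl
      _ = _ := by ac_rfl
  refine ⟨fun g => ∏ x, F g x, fun a b => ?_⟩
  have hprod : (∏ x, F a x) * ∏ x, F b x = β a b ^ H.index * ∏ x, F (a * b) x := by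
    rw [← Equiv.prod_comp (MulAction.toPerm b) (F a), ← Finset.prod_mul_distrib]
    simp only [MulAction.toPerm_apply, hF, Finset.prod_mul_distrib, Finset.prod_const,
      Finset.card_univ, H.index_eq_card, Nat.card_eq_fintype_card]
  rw [Pi.pow_apply, Pi.pow_apply, eq_div_iff_mul_eq', hprod]

theorem IsCocycle.of_comp {L : Type*} [Group L] {φ : K →* L} (hφ : Function.Surjective φ)
    {β : L → L → A} (h : IsCocycle fun a b => β (φ a) (φ b)) : IsCocycle β := by
  intro a b c
  obtain ⟨a, rfl⟩ := hφ a
  obtain ⟨b, rfl⟩ := hφ b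
  obtain ⟨c, rfl⟩ := hφ c
  simpa only [map_mul] using h a b c

theorem IsCoboundary.mul {β γ : K → K → A} (hβ : IsCoboundary β) (hγ : IsCoboundary γ) :
    IsCoboundary (β * γ) := by
  obtain ⟨μ, hμ⟩ := hβ
  obtain ⟨μ', hμ'⟩ := hγ
  refine ⟨μ * μ', fun a b => ?_⟩
  simp only [Pi.mul_apply, hμ, hμ', div_mul_div_comm, mul_mul_mul_comm]

theorem IsCoboundary.inv {β : K → K → A} (hβ : IsCoboundary β) : IsCoboundary β⁻¹ := by
  obtain ⟨μ, hμ⟩ := hβ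
  refine ⟨μ⁻¹, fun a b => ?_⟩
  simp only [Pi.inv_apply, hμ, inv_div', mul_inv]

def coboundaryExponents (β : K → K → A) : AddSubgroup ℤ where
  carrier := {n | IsCoboundary (β ^ n)}
  zero_mem' := ⟨1, fun a b => by simp⟩
  add_mem' {m n} hm hn := by
    simp only [Set.mem_ofPred_eq, zpow_add] at hm hn ⊢
    exact hm.mul hn
  neg_mem' {n} hn := by
    simp only [Set.mem_ofPred_eq, zpow_neg] at hn ⊢
    exact hn.inv

@[simp]
theorem mem_coboundaryExponents {β : K → K → A} {n : ℤ} :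
    n ∈ coboundaryExponents β ↔ IsCoboundary (β ^ n) :=
  Iff.rfl

theorem Int.one_mem_of_forall_prime_exists_not_dvd {I : AddSubgroup ℤ}
    (h : ∀ p : ℕ, p.Prime → ∃ m ∈ I, ¬(p : ℤ) ∣ m) : (1 : ℤ) ∈ I := by
  obtain ⟨d, rfl⟩ := Int.subgroup_cyclic I
  have hd : d.natAbs = 1 := Nat.eq_one_iff_not_exists_prime_dvd.mpr fun p hp hpd => by
    obtain ⟨m, hm, hpm⟩ := h p hp
    obtain ⟨n, rfl⟩ := AddSubgroup.mem_closure_singleton.mp hm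
    exact hpm ((Int.natCast_dvd.mpr hpd).mul_left n)
  rw [← AddSubgroup.zmultiples_eq_closure, ← Int.zmultiples_natAbs, hd]
  exact AddSubgroup.mem_zmultiples 1

theorem IsCocycle.isCoboundary_of_forall_sylow [Finite K] {β : K → K → A} (hβ : IsCocycle β)
    (h : ∀ p : ℕ, p.Prime → ∃ S : Sylow p K, IsCoboundary fun a b : S => β a b) :
    IsCoboundary β := by
  have := Int.one_mem_of_forall_prime_exists_not_dvd (I := coboundaryExponents β) fun p hp => by
    have := Fact.mk hp
    obtain ⟨S, hS⟩ := h p hp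
    refine ⟨S.index, ?_, by exact_mod_cast S.not_dvd_index⟩
    simpa using hβ.isCoboundary_pow_index hS
  simpa using this

end Cocycle

namespace Representation

variable {k V : Type*} [Field k] [AddCommGroup V] [Module k V]

theorem Equiv.exists_comp_eq {N G U : Type*} [Group N] [Group G] [AddCommGroup U] [Module k U]
    {ρ : Representation k N V} {φ : N →* G} {σ : Representation k G U}
    (e : Representation.Equiv ρ (σ.comp φ)) : ∃ σ' : Representation k G V, σ'.comp φ = ρ := by
  refine ⟨(e.toLinearEquiv.symm.conjAlgEquiv k).toMonoidHom.comp σ, ?_⟩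
  ext n v
  show e.symm (σ (φ n) (e v)) = ρ n v
  exact (congrArg e.symm (IntertwiningMap.isIntertwining _ _ e.toIntertwiningMap n v)).symm.trans
    (e.symm_apply_apply _)

section Commutant

variable {G : Type*} [Group G] {ρ : Representation k G V}

theorem nontrivial_of_finrank_intertwiningMap_eq_one
    (h : finrank k (IntertwiningMap ρ ρ) = 1) : Nontrivial V := by
  have := Module.nontrivial_of_finrank_eq_succ h
  by_contra hV
  rw [not_nontrivial_iff_subsingleton] at hV
  exact one_ne_zero (IntertwiningMap.ext (Subsingleton.elim _ _) : (1 : IntertwiningMap ρ ρ) = 0)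

theorem exists_eq_smul_id_of_finrank_intertwiningMap_eq_one
    (h : finrank k (IntertwiningMap ρ ρ) = 1) {A : V →ₗ[k] V}
    (hA : IsIntertwiningMap ρ ρ A) : ∃ c : k, A = c • LinearMap.id := by
  have := Module.nontrivial_of_finrank_eq_succ h
  obtain ⟨c, hc⟩ := (finrank_eq_one_iff_of_nonzero' 1 one_ne_zero).mp h
    (A.intertwiningMap_of_isIntertwiningMap ρ ρ hA.isIntertwining)
  exact ⟨c, congrArg IntertwiningMap.toLinearMap hc.symm⟩

theorem finrank_intertwiningMap_eq_one_of_comp {N : Type*} [Group N] (φ : N →* G)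
    (h : finrank k (IntertwiningMap (ρ.comp φ) (ρ.comp φ)) = 1) :
    finrank k (IntertwiningMap ρ ρ) = 1 := by
  have := nontrivial_of_finrank_intertwiningMap_eq_one h
  have : (1 : IntertwiningMap ρ ρ) ≠ 0 := fun h1 => by
    obtain ⟨v, hv⟩ := exists_ne (0 : V)
    exact hv (LinearMap.congr_fun (congrArg IntertwiningMap.toLinearMap h1) v)
  refine (finrank_eq_one_iff_of_nonzero' 1 this).mpr fun f => ?_
  obtain ⟨c, hc⟩ := exists_eq_smul_id_of_finrank_intertwiningMap_eq_one h
    (A := f.toLinearMap) ⟨fun n v => IntertwiningMap.isIntertwining _ _ f (φ n) v⟩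
  exact ⟨c, IntertwiningMap.ext hc.symm⟩

end Commutant

section Clifford

variable {G : Type*} [Group G] {N : Subgroup G} [N.Normal]

def conjugate (ρ : Representation k N V) (g : G) : Representation k N V :=
  ρ.comp (MulAut.conjNormal g).toMonoidHom

@[simp]
theorem conjugate_apply (ρ : Representation k N V) (g : G) (n : N) :
    ρ.conjugate g n = ρ (MulAut.conjNormal g n) :=
  rfl

variable {ρ : Representation k N V}

theorem isIntertwiningMap_conjugate_self (n : N) : IsIntertwiningMap ρ (ρ.conjugate n) (ρ n) :=
  ⟨fun m v => by
    rw [conjugate_apply, ← Module.End.mul_apply, ← map_mul, ← Module.End.mul_apply, ← map_mul]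
    congr 2
    ext
    simp [MulAut.conjNormal_apply]⟩

theorem isIntertwiningMap_conjugate_of_comp_eq {Q : Subgroup G} {hNQ : N ≤ Q}
    {σ : Representation k Q V} (hσ : σ.comp (Subgroup.inclusion hNQ) = ρ) (x : Q) :
    IsIntertwiningMap ρ (ρ.conjugate x) (σ x) :=
  ⟨fun n v => by
    rw [← hσ, conjugate_apply, MonoidHom.comp_apply, MonoidHom.comp_apply,
      ← Module.End.mul_apply, ← map_mul, ← Module.End.mul_apply, ← map_mul]
    congr 2
    ext
    simp [MulAut.conjNormal_apply]⟩

theorem IsIntertwiningMap.comp_conjugate {g h : G} {A B : V →ₗ[k] V}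
    (hA : IsIntertwiningMap ρ (ρ.conjugate g) A) (hB : IsIntertwiningMap ρ (ρ.conjugate h) B) :
    IsIntertwiningMap ρ (ρ.conjugate (g * h)) (A ∘ₗ B) :=
  ⟨fun n v => by
    simp only [LinearMap.comp_apply, hB.isIntertwining, hA.isIntertwining, conjugate_apply,
      map_mul, MulAut.mul_apply]⟩

theorem IsIntertwiningMap.exists_eq_smul_of_conjugate (h1 : finrank k (IntertwiningMap ρ ρ) = 1)
    {g : G} {A B : V →ₗ[k] V} (hA : IsIntertwiningMap ρ (ρ.conjugate g) A)
    (hB : IsIntertwiningMap ρ (ρ.conjugate g) B) (hB' : Function.Bijective B) :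
    ∃ c : k, A = c • B := by
  let e : Representation.Equiv ρ (ρ.conjugate g) :=
    .mk (LinearEquiv.ofBijective B hB') fun n => LinearMap.ext (hB.isIntertwining n)
  obtain ⟨c, hc⟩ := exists_eq_smul_id_of_finrank_intertwiningMap_eq_one h1
    (A := e.symm.toLinearMap ∘ₗ A) ⟨fun n v => by
      simpa [hA.isIntertwining] using
        IntertwiningMap.isIntertwining _ _ e.symm.toIntertwiningMap n (A v)⟩
  refine ⟨c, LinearMap.ext fun v => ?_⟩
  exact (by simpa using congrArg e (LinearMap.congr_fun hc v) : A v = c • e v)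

-- A projective representation of `G` extending `ρ`, as in Isaacs, *Character Theory of Finite
-- Groups*, Chapter 11.
structure IsProjectiveExtension (ρ : Representation k N V) (P : G → V →ₗ[k] V) : Prop where
  bijective (g : G) : Function.Bijective (P g)
  isIntertwiningMap (g : G) : IsIntertwiningMap ρ (ρ.conjugate g) (P g)
  mul_left (n : N) (g : G) : P (n * g) = ρ n ∘ₗ P g
  one : P 1 = LinearMap.id

theorem exists_isProjectiveExtension
    (h : ∀ g : G, ∃ T : V →ₗ[k] V, Function.Bijective T ∧ IsIntertwiningMap ρ (ρ.conjugate g) T) :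
    ∃ P, IsProjectiveExtension ρ P := by
  choose T hT using h
  -- `P g = ρ (g * s⁻¹) ∘ T' s` for the representative `s` of `g N`; taking `T' = ρ` on `N`
  -- makes `P 1 = id`.
  let T' : G → V →ₗ[k] V := fun g => if hg : g ∈ N then ρ ⟨g, hg⟩ else T g
  have hT' (g : G) : Function.Bijective (T' g) ∧ IsIntertwiningMap ρ (ρ.conjugate g) (T' g) := by
    by_cases hg : g ∈ N
    · simpa only [T', dif_pos hg] using
        ⟨ρ.apply_bijective _, isIntertwiningMap_conjugate_self ⟨g, hg⟩⟩
    · simpa only [T', dif_neg hg] using hT g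
  let s : G → G := fun g => (QuotientGroup.mk g : G ⧸ N).out
  have hs (n : N) (g : G) : s (n * g) = s g := by
    simp only [s, QuotientGroup.mk_mul, (QuotientGroup.eq_one_iff _).mpr n.2, one_mul]
  have hmem (g : G) : g * (s g)⁻¹ ∈ N := by
    rw [← QuotientGroup.eq_one_iff, QuotientGroup.mk_mul, QuotientGroup.mk_inv,
      QuotientGroup.out_eq', mul_inv_cancel]
  let P : G → V →ₗ[k] V := fun g => ρ ⟨_, hmem g⟩ ∘ₗ T' (s g)
  refine ⟨P, fun g => (ρ.apply_bijective _).comp (hT' _).1, fun g => ?_, fun n g => ?_, ?_⟩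
  · have := (isIntertwiningMap_conjugate_self ⟨_, hmem g⟩).comp_conjugate (hT' (s g)).2
    rwa [Subgroup.coe_mk, inv_mul_cancel_right] at this
  · have : (⟨n * g * (s (n * g))⁻¹, hmem _⟩ : N) = n * ⟨g * (s g)⁻¹, hmem g⟩ := by
      ext; simp [hs, mul_assoc]
    simp only [P]
    rw [this, map_mul, Module.End.mul_eq_comp, LinearMap.comp_assoc, hs]
  · have h1 : s 1 ∈ N := by simpa using hmem 1
    have : (⟨1 * (s 1)⁻¹, hmem 1⟩ : N) * ⟨s 1, h1⟩ = 1 := by ext; simp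
    simp only [P, T', dif_pos h1, ← Module.End.mul_eq_comp, ← map_mul, this, map_one]
    rfl

namespace IsProjectiveExtension

variable {P : G → V →ₗ[k] V} (hP : IsProjectiveExtension ρ P)
include hP

theorem apply_coe (n : N) : P n = ρ n := by
  simpa [hP.one] using hP.mul_left n 1

theorem mul_right (g : G) (n : N) : P (g * n) = P g ∘ₗ ρ n := by
  have : g * n = (MulAut.conjNormal g n : G) * g := by simp [MulAut.conjNormal_apply]
  rw [this, hP.mul_left]
  exact (LinearMap.ext fun v => ((hP.isIntertwiningMap g).isIntertwining n v).symm)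

variable (h1 : finrank k (IntertwiningMap ρ ρ) = 1)
include h1

theorem exists_eq_units_smul {g : G} {A : V →ₗ[k] V} (hA : IsIntertwiningMap ρ (ρ.conjugate g) A)
    (hA' : Function.Bijective A) : ∃ c : kˣ, A = (c : k) • P g := by
  have := nontrivial_of_finrank_intertwiningMap_eq_one h1
  obtain ⟨c, hc⟩ := hA.exists_eq_smul_of_conjugate h1 (hP.isIntertwiningMap g) (hP.bijective g)
  refine ⟨Units.mk0 c fun hc0 => ?_, hc⟩
  obtain ⟨v, hv⟩ := exists_ne (0 : V)
  exact hv (hA'.injective (by simp [hc, hc0]))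

theorem eq_of_smul_eq_smul {g : G} {c d : kˣ} (h : (c : k) • P g = (d : k) • P g) : c = d := by
  have := nontrivial_of_finrank_intertwiningMap_eq_one h1
  have hP0 : P g ≠ 0 := fun h0 => by
    obtain ⟨v, hv⟩ := exists_ne (0 : V)
    exact hv ((hP.bijective g).injective (by simp [h0]))
  exact Units.ext (smul_left_injective k hP0 h)

noncomputable def factorSet (g h : G) : kˣ :=
  (hP.exists_eq_units_smul h1 ((hP.isIntertwiningMap g).comp_conjugate (hP.isIntertwiningMap h))
    ((hP.bijective g).comp (hP.bijective h))).choose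

theorem comp_eq_factorSet_smul (g h : G) :
    P g ∘ₗ P h = (hP.factorSet h1 g h : k) • P (g * h) :=
  (hP.exists_eq_units_smul h1 ((hP.isIntertwiningMap g).comp_conjugate (hP.isIntertwiningMap h))
    ((hP.bijective g).comp (hP.bijective h))).choose_spec

theorem isCocycle_factorSet : IsCocycle (hP.factorSet h1) := fun a b c => by
  apply hP.eq_of_smul_eq_smul h1 (g := a * b * c)
  have := congrArg (· ∘ₗ P c) (hP.comp_eq_factorSet_smul h1 a b)
  rw [LinearMap.comp_assoc, hP.comp_eq_factorSet_smul h1 b c, LinearMap.comp_smul,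
    hP.comp_eq_factorSet_smul h1 a (b * c), LinearMap.smul_comp,
    hP.comp_eq_factorSet_smul h1 (a * b) c, smul_smul, smul_smul, ← mul_assoc] at this
  simpa [mul_comm] using this.symm

theorem factorSet_coe_mul_left (n : N) (g h : G) :
    hP.factorSet h1 (n * g) h = hP.factorSet h1 g h := by
  apply hP.eq_of_smul_eq_smul h1 (g := n * g * h)
  rw [← hP.comp_eq_factorSet_smul, hP.mul_left, LinearMap.comp_assoc,
    hP.comp_eq_factorSet_smul, LinearMap.comp_smul, ← hP.mul_left, mul_assoc]

theorem factorSet_mul_coe_left (g : G) (n : N) (h : G) :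
    hP.factorSet h1 (g * n) h = hP.factorSet h1 g h := by
  have : g * n = (MulAut.conjNormal g n : G) * g := by simp [MulAut.conjNormal_apply]
  rw [this, factorSet_coe_mul_left]

theorem factorSet_mul_coe_right (g h : G) (n : N) :
    hP.factorSet h1 g (h * n) = hP.factorSet h1 g h := by
  apply hP.eq_of_smul_eq_smul h1 (g := g * (h * n))
  rw [← hP.comp_eq_factorSet_smul, hP.mul_right, ← LinearMap.comp_assoc,
    hP.comp_eq_factorSet_smul, LinearMap.smul_comp, ← hP.mul_right, mul_assoc]

noncomputable def quotientFactorSet (x y : G ⧸ N) : kˣ :=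
  hP.factorSet h1 x.out y.out

theorem factorSet_eq_quotientFactorSet (g h : G) :
    hP.factorSet h1 g h = hP.quotientFactorSet h1 g h := by
  obtain ⟨n, hn⟩ := QuotientGroup.mk_out_eq_mul N g
  obtain ⟨m, hm⟩ := QuotientGroup.mk_out_eq_mul N h
  rw [quotientFactorSet, hn, hm, factorSet_mul_coe_left, factorSet_mul_coe_right]

theorem isCocycle_quotientFactorSet : IsCocycle (hP.quotientFactorSet h1) := by
  refine IsCocycle.of_comp (QuotientGroup.mk'_surjective N) ?_
  simpa only [QuotientGroup.mk'_apply, ← factorSet_eq_quotientFactorSet] using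
    hP.isCocycle_factorSet h1

theorem quotientFactorSet_one_one : hP.quotientFactorSet h1 1 1 = 1 := by
  rw [← QuotientGroup.mk_one, ← factorSet_eq_quotientFactorSet]
  apply hP.eq_of_smul_eq_smul h1 (g := 1 * 1)
  rw [← hP.comp_eq_factorSet_smul, mul_one, hP.one, Units.val_one, one_smul, LinearMap.id_comp]

theorem isCoboundary_quotientFactorSet_restrict {S : Subgroup (G ⧸ N)}
    {hNS : N ≤ S.comap (QuotientGroup.mk' N)}
    {σ : Representation k (S.comap (QuotientGroup.mk' N)) V}
    (hσ : σ.comp (Subgroup.inclusion hNS) = ρ) :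
    IsCoboundary fun a b : S => hP.quotientFactorSet h1 a b := by
  let Q := S.comap (QuotientGroup.mk' N)
  choose c hc using fun x : Q => hP.exists_eq_units_smul h1
    (isIntertwiningMap_conjugate_of_comp_eq hσ x) (σ.apply_bijective x)
  have hc_mul (x y : Q) : c (x * y) = c x * c y * hP.factorSet h1 x y := by
    apply hP.eq_of_smul_eq_smul h1 (g := x * y)
    rw [← Subgroup.coe_mul, ← hc, map_mul, Module.End.mul_eq_comp, hc, hc, LinearMap.smul_comp,
      LinearMap.comp_smul, hP.comp_eq_factorSet_smul, smul_smul, smul_smul, Units.val_mul,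
      Units.val_mul, Subgroup.coe_mul]
  have hc_coe (x : Q) (n : N) : c (x * Subgroup.inclusion hNS n) = c x := by
    apply hP.eq_of_smul_eq_smul h1 (g := x * n)
    rw [← Subgroup.coe_inclusion hNS n, ← Subgroup.coe_mul, ← hc, map_mul,
      ← MonoidHom.comp_apply σ, hσ, Module.End.mul_eq_comp, hc, LinearMap.smul_comp,
      ← hP.mul_right]
    rfl
  have hout (a : S) : (a : G ⧸ N).out ∈ Q := by simp [Q]
  refine ⟨fun a => (c ⟨_, hout a⟩)⁻¹, fun a b => ?_⟩
  have hn : (⟨_, hout (a * b)⟩ : Q)⁻¹ * (⟨_, hout a⟩ * ⟨_, hout b⟩) ∈ N.subgroupOf Q := by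
    rw [Subgroup.mem_subgroupOf, ← QuotientGroup.eq_one_iff]
    simp
  have hab : (⟨_, hout a⟩ : Q) * ⟨_, hout b⟩ =
      ⟨_, hout (a * b)⟩ * Subgroup.inclusion hNS ⟨_, hn⟩ := by
    ext; simp
  have := hc_mul ⟨_, hout a⟩ ⟨_, hout b⟩
  rw [hab, hc_coe] at this
  rw [div_inv_eq_mul, this, ← mul_inv, inv_mul_cancel_left]
  rfl

theorem exists_extension (hβ : IsCoboundary (hP.quotientFactorSet h1)) :
    ∃ ρ' : Representation k G V, ρ'.comp N.subtype = ρ := by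
  obtain ⟨μ, hμ⟩ := hβ
  have hμ1 : μ 1 = 1 := by
    simpa [hP.quotientFactorSet_one_one h1, eq_comm] using hμ 1 1
  refine ⟨{ toFun g := ((μ g)⁻¹ : kˣ) • P g, map_one' := ?_, map_mul' g h := ?_ }, ?_⟩
  · rw [QuotientGroup.mk_one, hμ1, inv_one, one_smul, hP.one]
    rfl
  · simp only [Module.End.mul_eq_comp, LinearMap.smul_comp, LinearMap.comp_smul,
      hP.comp_eq_factorSet_smul h1, smul_smul, factorSet_eq_quotientFactorSet, hμ,
      QuotientGroup.mk_mul]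
    rw [Units.smul_def, Units.smul_def, smul_smul, ← Units.val_mul]
    congr 2
    rw [← mul_inv, mul_comm (μ h), mul_div_assoc', inv_mul_cancel, one_div]
  · ext n : 1
    simp [(QuotientGroup.eq_one_iff _).mpr n.2, hμ1, hP.apply_coe]

end IsProjectiveExtension

end Clifford

end Representation

namespace FDRep

universe u

variable {k H : Type u} [Field k] [IsAlgClosed k] [CharZero k] [Group H] [Finite H]

theorem simple_iff_finrank_intertwiningMap_eq_one (V : FDRep k H) :
    Simple V ↔ finrank k (IntertwiningMap V.ρ V.ρ) = 1 := by
  -- Both sides say that the character of `V` has norm one.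
  have := Fintype.ofFinite H
  have := invertibleOfNonzero (NeZero.ne (Nat.card H : k))
  rw [simple_iff_char_is_norm_one, ← Nat.cast_inj (R := k), Nat.cast_one,
    ← card_inv_mul_sum_char_mul_char_eq_finrank, inv_mul_eq_one₀ (NeZero.ne _)]
  simp only [character, Representation.character]
  exact eq_comm

theorem nonempty_equiv_of_character_eq (V : FDRep k H) [Simple V] {U : Type u} [AddCommGroup U]
    [Module k U] [FiniteDimensional k U] (σ : Representation k H U)
    (h : ∀ g, σ.character g = V.character g) : Nonempty (Representation.Equiv V.ρ σ) := by
  have := Fintype.ofFinite H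
  have := invertibleOfNonzero (NeZero.ne (Nat.card H : k))
  have hchar : (FDRep.of σ).character = V.character := funext h
  have : Simple (FDRep.of σ) := by
    rw [simple_iff_char_is_norm_one, hchar, ← simple_iff_char_is_norm_one]; infer_instance
  have horth := char_orthonormal V (FDRep.of σ)
  rw [hchar, (simple_iff_char_is_norm_one V).mp ‹_›, inv_mul_cancel₀ (NeZero.ne _)] at horth
  obtain ⟨i⟩ : Nonempty (V ≅ FDRep.of σ) := by
    by_contra hne; rw [if_neg hne] at horth; exact one_ne_zero horth
  refine ⟨.mk (isoToLinearEquiv i) fun g => LinearMap.ext fun v => ?_⟩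
  simpa [LinearEquiv.conj_apply] using
    (LinearMap.congr_fun (Iso.conj_ρ i g) (isoToLinearEquiv i v)).symm

theorem exists_comp_eq_of_character_eq (V : FDRep k H) [Simple V] {Q : Type*} [Group Q]
    {U : Type u} [AddCommGroup U] [Module k U] [FiniteDimensional k U] (φ : H →* Q)
    (σ : Representation k Q U)
    (h : ∀ g, σ.character (φ g) = V.character g) :
    ∃ σ' : Representation k Q V, σ'.comp φ = V.ρ := by
  obtain ⟨e⟩ := V.nonempty_equiv_of_character_eq (σ.comp φ) h
  exact e.exists_comp_eq

end FDRep

/-- a G-invariant θ ∈ Irr(N) which extends to every Q with Q/N a Sylow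
subgroup of G/N extends to G. -/
theorem stmt14 {G : Type} [Group G] [Finite G] (N : Subgroup G) [hN : N.Normal]
    (θ : ↥N → ℂ) (hθ : IsIrrChar ↥N θ)
    (hinv : ∀ (g : G) (n : ↥N), θ ⟨g * n * g⁻¹, hN.conj_mem n.1 n.2 g⟩ = θ n)
    (hyp : ∀ (q : ℕ), q.Prime → ∀ Q : Subgroup G, ∀ hNQ : N ≤ Q,
      (∃ S : Sylow q (G ⧸ N), (S : Subgroup (G ⧸ N)) = Q.map (QuotientGroup.mk' N)) →
      ∃ ψ : ↥Q → ℂ, IsIrrChar ↥Q ψ ∧ ∀ n : ↥N, ψ ⟨n, hNQ n.2⟩ = θ n) :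
    ∃ χ : G → ℂ, IsIrrChar G χ ∧ ∀ n : ↥N, χ n = θ n := by
  obtain ⟨W, hW, rfl⟩ := hθ
  have h1 := (FDRep.simple_iff_finrank_intertwiningMap_eq_one W).mp hW
  have hconj (g : G) :
      ∃ T : W →ₗ[ℂ] W, Function.Bijective T ∧ IsIntertwiningMap W.ρ (conjugate W.ρ g) T := by
    obtain ⟨e⟩ := W.nonempty_equiv_of_character_eq (conjugate W.ρ g) (hinv g)
    exact ⟨e.toLinearMap, e.bijective, ⟨IntertwiningMap.isIntertwining _ _ e.toIntertwiningMap⟩⟩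
  obtain ⟨P, hP⟩ := exists_isProjectiveExtension hconj
  have hsylow (q : ℕ) (hq : q.Prime) :
      ∃ S : Sylow q (G ⧸ N), IsCoboundary fun a b : S => hP.quotientFactorSet h1 a b := by
    have := Fact.mk hq
    obtain ⟨S⟩ : Nonempty (Sylow q (G ⧸ N)) := inferInstance
    have hNS := QuotientGroup.le_comap_mk' N S
    obtain ⟨ψ, ⟨U, -, rfl⟩, hψ⟩ := hyp q hq _ hNS
      ⟨S, (Subgroup.map_comap_eq_self_of_surjective (QuotientGroup.mk'_surjective N) _).symm⟩
    obtain ⟨σ, hσ⟩ := W.exists_comp_eq_of_character_eq (Subgroup.inclusion hNS) U.ρ hψ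
    exact ⟨S, hP.isCoboundary_quotientFactorSet_restrict h1 hσ⟩
  obtain ⟨ρ', hρ'⟩ := hP.exists_extension h1
    ((hP.isCocycle_quotientFactorSet h1).isCoboundary_of_forall_sylow hsylow)
  refine ⟨(FDRep.of ρ').character, ⟨FDRep.of ρ', ?_, rfl⟩, fun n => ?_⟩
  · rw [FDRep.simple_iff_finrank_intertwiningMap_eq_one]
    exact finrank_intertwiningMap_eq_one_of_comp N.subtype (hρ' ▸ h1)
  · exact congrArg (LinearMap.trace ℂ W) (DFunLike.congr_fun hρ' n)
end
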